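/- Bayes characterization of the conditional P(y_l | Z): let ν be the probability measure on {1,…,n} × ℝ^N given by ν = (1/n) ∑_{k=1}^n δ_k ⊗ (Lebesgue measure on ℝ^N with density w_k). Then the conditional expectation of the function (k, z) ↦ y_l(k) with respect to the σ-algebra generated by the projection (k, z) ↦ z equals the function (k, z) ↦ g_l(z), ν-almost everywhere. -/

import Mathlib

/-!
Bayes' rule. On a set `Prod.snd ⁻¹' t` of the observation σ-algebra, the mixture integrates
`(k, z) ↦ Y k` to `∑ k, ∫_t Y k · f k` and `(k, z) ↦ G z` to `∫_t G · ∑ k, f k`. For the posterior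
mean `G = (∑ k, Y k · f k) / ∑ k, f k` these agree pointwise, and `G ∘ Prod.snd` is measurable for
the observation σ-algebra and bounded by `∑ k, |Y k|`, so it is the conditional expectation by the
uniqueness of conditional expectations.
-/

open MeasureTheory ProbabilityTheory Real

/-- Density of the normal distribution `N(μ, σ²)`. -/
noncomputable def phi (μ σ z : ℝ) : ℝ :=
  (σ * Real.sqrt (2 * Real.pi))⁻¹ * Real.exp (-(z - μ) ^ 2 / (2 * σ ^ 2))

/-- Weight function `w_k(z) = ∏_{i=1}^N φ_{μ_k^i, σ_k^i}(z_i)`. -/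
noncomputable def w {n N : ℕ} (μ σ : Fin n → Fin N → ℝ) (k : Fin n)
    (z : Fin N → ℝ) : ℝ :=
  ∏ i, phi (μ k i) (σ k i) (z i)

/-- The function `g_l(z) = (∑_k y_l(k)·w_k(z)) / (∑_k w_k(z))`. -/
noncomputable def g {n N m : ℕ} (μ σ : Fin n → Fin N → ℝ) (y : Fin m → Fin n → ℝ)
    (l : Fin m) (z : Fin N → ℝ) : ℝ :=
  (∑ k, y l k * w μ σ k z) / (∑ k, w μ σ k z)

open scoped ENNReal

section PosteriorMean

variable {ι α : Type*} [Fintype ι]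

noncomputable def posteriorMean (Y : ι → ℝ) (f : ι → α → ℝ) (z : α) : ℝ :=
  (∑ k, Y k * f k z) / ∑ k, f k z

-- Where `∑ k, f k z = 0` every `f k z` vanishes, so the junk value `x / 0 = 0` does no harm.
lemma posteriorMean_mul_sum {f : ι → α → ℝ} (hf : ∀ k z, 0 ≤ f k z) (Y : ι → ℝ) (z : α) :
    posteriorMean Y f z * ∑ k, f k z = ∑ k, Y k * f k z := by
  refine div_mul_cancel_of_imp fun hsum => Finset.sum_eq_zero fun k _ => ?_
  rw [(Finset.sum_eq_zero_iff_of_nonneg fun k _ => hf k z).1 hsum k (Finset.mem_univ k), mul_zero]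

lemma abs_posteriorMean_le {f : ι → α → ℝ} (hf : ∀ k z, 0 ≤ f k z) (Y : ι → ℝ) (z : α) :
    |posteriorMean Y f z| ≤ ∑ k, |Y k| := by
  have hsum : 0 ≤ ∑ k, f k z := Finset.sum_nonneg fun k _ => hf k z
  rw [posteriorMean, abs_div, abs_of_nonneg hsum]
  refine div_le_of_le_mul₀ hsum (Finset.sum_nonneg fun k _ => abs_nonneg _) ?_
  calc |∑ k, Y k * f k z| ≤ ∑ k, |Y k| * f k z := by
        refine (Finset.abs_sum_le_sum_abs _ _).trans (Finset.sum_le_sum fun k _ => ?_)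
        rw [abs_mul, abs_of_nonneg (hf k z)]
    _ ≤ ∑ k, |Y k| * ∑ j, f j z := by
        refine Finset.sum_le_sum fun k _ => mul_le_mul_of_nonneg_left ?_ (abs_nonneg _)
        exact Finset.single_le_sum (fun j _ => hf j z) (Finset.mem_univ k)
    _ = (∑ k, |Y k|) * ∑ k, f k z := (Finset.sum_mul ..).symm

lemma measurable_posteriorMean [MeasurableSpace α] {f : ι → α → ℝ}
    (hf : ∀ k, Measurable (f k)) (Y : ι → ℝ) : Measurable (posteriorMean Y f) := by
  unfold posteriorMean
  fun_prop

lemma sum_setIntegral_mul_posteriorMean [MeasurableSpace α] {ρ : Measure α} {f : ι → α → ℝ}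
    (hm : ∀ k, Measurable (f k)) (h0 : ∀ k z, 0 ≤ f k z)
    (hi : ∀ k, Integrable (f k) ρ) (Y : ι → ℝ) (t : Set α) :
    ∑ k, ∫ z in t, f k z * posteriorMean Y f z ∂ρ = ∑ k, ∫ z in t, f k z * Y k ∂ρ := by
  rw [← integral_finsetSum _ fun k _ => (hi k).integrableOn.mul_bdd
      (measurable_posteriorMean hm Y).aestronglyMeasurable
      (.of_forall fun z => abs_posteriorMean_le h0 Y z),
    ← integral_finsetSum _ fun k _ => (hi k).integrableOn.mul_const (Y k)]
  refine integral_congr_ae (.of_forall fun z => ?_)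
  simp only [← Finset.sum_mul, mul_comm _ (Y _)]
  rw [mul_comm, posteriorMean_mul_sum h0]

end PosteriorMean

section LabelledMixture

variable {ι α : Type*} [MeasurableSpace ι] [MeasurableSpace α] {ρ : Measure α}

/-- The joint law of a label `k` and an observation `z` whose law given `k` has density `f k`
with respect to `ρ`; the prior weight of `k` is absorbed into `f k`. -/
noncomputable def labelledMixture [Fintype ι] (ρ : Measure α) (f : ι → α → ℝ) :
    Measure (ι × α) :=
  ∑ k, (Measure.dirac k).prod (ρ.withDensity fun z => ENNReal.ofReal (f k z))

lemma isFiniteMeasure_labelledMixture [Fintype ι] {f : ι → α → ℝ}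
    (hf : ∀ k, Integrable (f k) ρ) : IsFiniteMeasure (labelledMixture ρ f) := by
  have := fun k => isFiniteMeasure_withDensity_ofReal (hf k).hasFiniteIntegral
  unfold labelledMixture
  infer_instance

variable [MeasurableSingletonClass ι] [SFinite ρ]

lemma setIntegral_preimage_snd_dirac_prod_withDensity {h : α → ℝ} (hm : Measurable h)
    (h0 : ∀ z, 0 ≤ h z) (k : ι) (F : ι × α → ℝ) {t : Set α} (ht : MeasurableSet t) :
    ∫ p in Prod.snd ⁻¹' t, F p ∂(Measure.dirac k).prod (ρ.withDensity fun z => .ofReal (h z)) =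
      ∫ z in t, h z * F (k, z) ∂ρ := by
  rw [Measure.dirac_prod, Measure.restrict_map measurable_prodMk_left (measurable_snd ht),
    (measurableEmbedding_prodMk_left k).integral_map,
    show Prod.mk k ⁻¹' (Prod.snd ⁻¹' t) = t from rfl,
    setIntegral_withDensity_eq_setIntegral_toReal_smul hm.ennreal_ofReal
      (.of_forall fun _ => ENNReal.ofReal_lt_top) _ ht]
  simp only [ENNReal.toReal_ofReal (h0 _), smul_eq_mul]

variable [Fintype ι] {f : ι → α → ℝ}

lemma setIntegral_preimage_snd_labelledMixture (hm : ∀ k, Measurable (f k))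
    (h0 : ∀ k z, 0 ≤ f k z) {F : ι × α → ℝ} (hF : Integrable F (labelledMixture ρ f))
    {t : Set α} (ht : MeasurableSet t) :
    ∫ p in Prod.snd ⁻¹' t, F p ∂labelledMixture ρ f = ∑ k, ∫ z in t, f k z * F (k, z) ∂ρ := by
  rw [labelledMixture, ← Measure.restrictₗ_apply, map_sum, integral_finsetSum_measure]
  · exact Finset.sum_congr rfl fun k _ =>
      setIntegral_preimage_snd_dirac_prod_withDensity (hm k) (h0 k) k F ht
  · exact fun k hk => (integrable_finsetSum_measure.1 hF k hk).restrict

theorem condExp_comap_snd_smul_labelledMixture {c : ℝ≥0∞} (hc : c ≠ ∞)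
    (hm : ∀ k, Measurable (f k)) (h0 : ∀ k z, 0 ≤ f k z) (hi : ∀ k, Integrable (f k) ρ)
    (Y : ι → ℝ) :
    (c • labelledMixture ρ f)[fun p => Y p.1 | MeasurableSpace.comap Prod.snd ‹_›]
      =ᵐ[c • labelledMixture ρ f] fun p => posteriorMean Y f p.2 := by
  have := isFiniteMeasure_labelledMixture hi
  have := (labelledMixture ρ f).smul_finite hc
  have hY : ∀ {ν : Measure (ι × α)} [IsFiniteMeasure ν], Integrable (fun p => Y p.1) ν :=
    Integrable.of_bound ((measurable_of_countable Y).comp measurable_fst).aestronglyMeasurable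
      (∑ k, |Y k|) (.of_forall fun p =>
        Finset.single_le_sum (fun k _ => abs_nonneg (Y k)) (Finset.mem_univ p.1))
  have hG : ∀ {ν : Measure (ι × α)} [IsFiniteMeasure ν],
      Integrable (fun p => posteriorMean Y f p.2) ν :=
    Integrable.of_bound ((measurable_posteriorMean hm Y).comp measurable_snd).aestronglyMeasurable
      (∑ k, |Y k|) (.of_forall fun p => abs_posteriorMean_le h0 Y p.2)
  refine (ae_eq_condExp_of_forall_setIntegral_eq measurable_snd.comap_le hY
    (fun s _ _ => hG.integrableOn) ?_
    ((measurable_posteriorMean hm Y).comp (comap_measurable _)).aestronglyMeasurable).symm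
  rintro _ ⟨t, ht, rfl⟩ -
  simp only [Measure.restrict_smul, integral_smul_measure,
    setIntegral_preimage_snd_labelledMixture hm h0 hY ht,
    setIntegral_preimage_snd_labelledMixture hm h0 hG ht,
    sum_setIntegral_mul_posteriorMean hm h0 hi]

end LabelledMixture

section Gaussian

variable {μ σ : ℝ}

lemma phi_eq_gaussianPDFReal (hσ : 0 ≤ σ) :
    phi μ σ = gaussianPDFReal μ (σ ^ 2).toNNReal := by
  funext z
  rw [phi, gaussianPDFReal_def, Real.coe_toNNReal _ (sq_nonneg σ), mul_comm (2 * π),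
    Real.sqrt_mul (sq_nonneg σ), Real.sqrt_sq hσ]

lemma phi_nonneg (hσ : 0 ≤ σ) (z : ℝ) : 0 ≤ phi μ σ z := by
  unfold phi
  positivity

lemma measurable_phi : Measurable (phi μ σ) := by
  unfold phi
  fun_prop

lemma integrable_phi (hσ : 0 ≤ σ) : Integrable (phi μ σ) := by
  rw [phi_eq_gaussianPDFReal hσ]
  exact integrable_gaussianPDFReal _ _

variable {n N : ℕ} {μ σ : Fin n → Fin N → ℝ}

lemma w_nonneg (hσ : ∀ k i, 0 ≤ σ k i) (k : Fin n) (z : Fin N → ℝ) : 0 ≤ w μ σ k z :=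
  Finset.prod_nonneg fun i _ => phi_nonneg (hσ k i) _

lemma measurable_w (k : Fin n) : Measurable (w μ σ k) :=
  Finset.measurable_prod _ fun i _ => measurable_phi.comp (measurable_pi_apply i)

lemma integrable_w (hσ : ∀ k i, 0 ≤ σ k i) (k : Fin n) : Integrable (w μ σ k) :=
  Integrable.fintype_prod (f := fun i => phi (μ k i) (σ k i)) fun i => integrable_phi (hσ k i)

end Gaussian

theorem stmt12_general (N n m : ℕ) (hn : 1 ≤ n)
    (μ σ : Fin n → Fin N → ℝ) (hσ : ∀ k i, 0 < σ k i)
    (y : Fin m → Fin n → ℝ) (l : Fin m)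
    (ν : Measure (Fin n × (Fin N → ℝ)))
    (hν : ν = ((n : ENNReal))⁻¹ •
        ∑ k, (Measure.dirac k).prod
          ((volume : Measure (Fin N → ℝ)).withDensity
            (fun z => ENNReal.ofReal (w μ σ k z)))) :
    MeasureTheory.condExp
        (MeasurableSpace.comap (Prod.snd : Fin n × (Fin N → ℝ) → (Fin N → ℝ))
          inferInstance)
        ν (fun p => y l p.1) =ᵐ[ν]
      fun p : Fin n × (Fin N → ℝ) => g μ σ y l p.2 := by
  have hσ₀ : ∀ k i, 0 ≤ σ k i := fun k i => (hσ k i).le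
  have hn₀ : (n : ℝ≥0∞)⁻¹ ≠ ∞ :=
    ENNReal.inv_ne_top.2 (by exact_mod_cast Nat.one_le_iff_ne_zero.1 hn)
  subst hν
  exact condExp_comap_snd_smul_labelledMixture hn₀ measurable_w (w_nonneg hσ₀)
    (integrable_w hσ₀) (y l)

theorem stmt12 (N n m : ℕ) (hn : 1 ≤ n)
    (μ σ : Fin n → Fin N → ℝ) (hσ : ∀ k i, 0 < σ k i)
    (y : Fin m → Fin n → ℝ) (hy : ∀ l k, y l k ∈ Set.Icc (0 : ℝ) 1)
    (hysum : ∀ k, ∑ l, y l k = 1) (l : Fin m)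
    (ν : Measure (Fin n × (Fin N → ℝ)))
    (hν : ν = ((n : ENNReal))⁻¹ •
        ∑ k, (Measure.dirac k).prod
          ((volume : Measure (Fin N → ℝ)).withDensity
            (fun z => ENNReal.ofReal (w μ σ k z)))) :
    MeasureTheory.condExp
        (MeasurableSpace.comap (Prod.snd : Fin n × (Fin N → ℝ) → (Fin N → ℝ))
          inferInstance)
        ν (fun p => y l p.1) =ᵐ[ν]
      fun p : Fin n × (Fin N → ℝ) => g μ σ y l p.2 :=
  stmt12_general N n m hn μ σ hσ y l ν hν
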